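/- Given a propositional BD+-Dunn-model I₀ (a two-dimensional valuation assigning each atom a subset of {0,1}), define a two-world star model with W = {a,b}, a* = b, b* = a, where an atom p is true at a iff 1 ∈ I₀(p) and true at b iff 0 ∉ I₀(p). Then for every formula A: I₁(a, A) = 1 iff 1 ∈ I₀(A), and I₁(b, A) = 1 iff 0 ∉ I₀(A). -/
import Mathlib


inductive Fm : Type where
  | atom : Nat → Fm
  | bot : Fm
  | snot : Fm → Fm
  | and : Fm → Fm → Fm
  | or : Fm → Fm → Fm
  | imp : Fm → Fm → Fm
deriving DecidableEq

/-- Intuitionistic/Boolean negation `¬A := A → ⊥`. -/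
def negFm (A : Fm) : Fm := Fm.imp A Fm.bot

/-- Biconditional `A ↔ B := (A→B) ∧ (B→A)`. -/
def iffFm (A B : Fm) : Fm := Fm.and (Fm.imp A B) (Fm.imp B A)

/-- Belnap–Dunn two-dimensional interpretation: first component is "1 ∈ I(A)",
second is "0 ∈ I(A)". -/
def tv (v : Nat → Bool × Bool) : Fm → Bool × Bool
  | .atom n => v n
  | .bot => (false, true)
  | .snot A => ((tv v A).2, (tv v A).1)
  | .and A B => ((tv v A).1 && (tv v B).1, (tv v A).2 || (tv v B).2)
  | .or A B => ((tv v A).1 || (tv v B).1, (tv v A).2 && (tv v B).2)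
  | .imp A B => (!(tv v A).1 || (tv v B).1, !(tv v A).2 && (tv v B).2)

structure StarModel where
  W : Type
  star : W → W
  invol : ∀ w, star (star w) = w
  V : W → Nat → Bool

/-- Star-semantics evaluation: `sv M A w = true` iff `I(w, A) = 1`. -/
def sv (M : StarModel) : Fm → M.W → Bool
  | .atom n, w => M.V w n
  | .bot, _ => false
  | .snot A, w => !(sv M A (M.star w))
  | .and A B, w => sv M A w && sv M B w
  | .or A B, w => sv M A w || sv M B w
  | .imp A B, w => !(sv M A w) || sv M B w

/-- The two-world star model built from a Dunn valuation `v0`: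
world `a` is `true`, world `b` is `false`, `a* = b`, `b* = a`; an atom is true
at `a` iff `1 ∈ I₀(p)` and true at `b` iff `0 ∉ I₀(p)`. -/
def twoStar (v0 : Nat → Bool × Bool) : StarModel where
  W := Bool
  star := fun w => !w
  invol := fun w => Bool.not_not w
  V := fun w n => if w then (v0 n).1 else !(v0 n).2

/-- For every formula `A`: `I₁(a, A) = 1` iff `1 ∈ I₀(A)`, and
`I₁(b, A) = 1` iff `0 ∉ I₀(A)`. -/
theorem twoStar_matches_dunn (v0 : Nat → Bool × Bool) (A : Fm) :
    sv (twoStar v0) A true = (tv v0 A).1 ∧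
    sv (twoStar v0) A false = !(tv v0 A).2 := by
  induction A with
  | atom n => simp [sv, tv, twoStar]
  | bot => simp [sv, tv]
  | snot A ih => simpa [sv, tv, twoStar] using ⟨ih.2, ih.1⟩
  | and A B ihA ihB => simp [sv, tv, ihA.1, ihA.2, ihB.1, ihB.2]
  | or A B ihA ihB => simp [sv, tv, ihA.1, ihA.2, ihB.1, ihB.2]
  | imp A B ihA ihB => simp [sv, tv, ihA.1, ihA.2, ihB.1, ihB.2]
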